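/- arXiv:1608.02770 — 4 statements merged into one kernel-verified Lean document; each statement's English description precedes it below -/
import Mathlib

section
/- Let c₀, c₁, c₂ ≥ 0, c₃ > 0 and p > 0. Then there exist constants c, c' > 0, depending only on c₀, c₁, c₂, c₃ and p (and not on the solution or on the time interval), with the following property: for every t₁ > 0 and every differentiable function f : [0, t₁] → ℝ with f(t) > 0 for all t ∈ [0, t₁] and satisfying the differential inequality f'(t) ≤ c₀ + c₁ f(t) + c₂ f(t)² − c₃ f(t)^{2+p} for all t ∈ [0, t₁], one has f(t) ≤ c + c' · t^{−1/(p+1)} for all t ∈ (0, t₁]. -/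
/-!
Where `f` is large the term `-c₃ f^(2+p)` dominates, so beyond a threshold `M` we have
`f' ≤ -(c₃/2) f^(2+p) < 0`. Hence `f` can never climb back above `M`: if `f t > M`, then `f > M`
on all of `[0, t]`. On that interval `f^{-(p+1)}` grows at least at the rate `(p+1) c₃/2`, so
`f(t)^{-(p+1)} ≥ (p+1)(c₃/2) t`, i.e. `f(t) ≤ ((p+1)(c₃/2) t)^{-1/(p+1)}`.
-/

open Set Filter

lemma quadratic_sub_rpow_le_neg_half {c₀ c₁ c₂ c₃ p x : ℝ} (h₀ : 0 ≤ c₀) (h₁ : 0 ≤ c₁)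
    (hx : 1 ≤ x) (hxp : 2 * (c₀ + c₁ + c₂) ≤ c₃ * x ^ p) :
    c₀ + c₁ * x + c₂ * x ^ 2 - c₃ * x ^ (2 + p) ≤ -(c₃ / 2) * x ^ (2 + p) := by
  have hsplit : x ^ (2 + p) = x ^ 2 * x ^ p := by
    rw [Real.rpow_add (by linarith), Real.rpow_two]
  have hquad : c₀ + c₁ * x + c₂ * x ^ 2 ≤ (c₀ + c₁ + c₂) * x ^ 2 := by
    nlinarith [mul_le_mul_of_nonneg_left (by nlinarith : x ≤ x ^ 2) h₁,
      mul_le_mul_of_nonneg_left (by nlinarith : 1 ≤ x ^ 2) h₀]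
  rw [hsplit]
  nlinarith [mul_le_mul_of_nonneg_right hxp (sq_nonneg x)]

lemma eventually_quadratic_sub_rpow_le_neg_half {c₀ c₁ c₂ c₃ p : ℝ} (h₀ : 0 ≤ c₀)
    (h₁ : 0 ≤ c₁) (h₃ : 0 < c₃) (hp : 0 < p) :
    ∀ᶠ x in atTop, c₀ + c₁ * x + c₂ * x ^ 2 - c₃ * x ^ (2 + p) ≤ -(c₃ / 2) * x ^ (2 + p) := by
  filter_upwards [eventually_ge_atTop 1,
    (tendsto_rpow_atTop hp).eventually_ge_atTop (2 * (c₀ + c₁ + c₂) / c₃)] with x hx hxp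
  exact quadratic_sub_rpow_le_neg_half h₀ h₁ hx ((div_le_iff₀' h₃).1 hxp)

lemma image_le_const_of_deriv_neg_of_eq {f f' : ℝ → ℝ} {a b M : ℝ}
    (hf : ∀ x ∈ Icc a b, HasDerivAt f (f' x) x) (hneg : ∀ x ∈ Icc a b, f x = M → f' x < 0)
    (ha : f a ≤ M) : ∀ x ∈ Icc a b, f x ≤ M :=
  image_le_of_deriv_right_lt_deriv_boundary (B := fun _ ↦ M)
    (fun x hx ↦ (hf x hx).continuousAt.continuousWithinAt)
    (fun x hx ↦ (hf x (Ico_subset_Icc_self hx)).hasDerivWithinAt) ha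
    (fun _ ↦ hasDerivAt_const _ M) (fun x hx ↦ hneg x (Ico_subset_Icc_self hx))

lemma const_lt_image_of_deriv_neg_of_eq {f f' : ℝ → ℝ} {a b M : ℝ}
    (hf : ∀ x ∈ Icc a b, HasDerivAt f (f' x) x) (hneg : ∀ x ∈ Icc a b, f x = M → f' x < 0)
    (hb : M < f b) : ∀ x ∈ Icc a b, M < f x := fun x hx ↦ by
  by_contra! hx_le
  have hsub : Icc x b ⊆ Icc a b := Icc_subset_Icc_left hx.1
  exact hb.not_ge (image_le_const_of_deriv_neg_of_eq (fun y hy ↦ hf y (hsub hy))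
    (fun y hy ↦ hneg y (hsub hy)) hx_le b (right_mem_Icc.2 hx.2))

section Bernoulli

variable {g g' : ℝ → ℝ} {a q t₀ t : ℝ}

lemma monotoneOn_rpow_neg_sub_mul (hq : 0 ≤ q) (hg : ∀ s ∈ Icc t₀ t, HasDerivAt g (g' s) s)
    (hpos : ∀ s ∈ Icc t₀ t, 0 < g s) (hg' : ∀ s ∈ Icc t₀ t, g' s ≤ -a * g s ^ (q + 1)) :
    MonotoneOn (fun s ↦ g s ^ (-q) - q * a * s) (Icc t₀ t) := by
  have hderiv : ∀ s ∈ Icc t₀ t, HasDerivAt (fun s ↦ g s ^ (-q) - q * a * s)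
      (g' s * -q * g s ^ (-q - 1) - q * a) s := fun s hs ↦
    (((hg s hs).rpow_const (p := -q) (Or.inl (hpos s hs).ne')).sub
      ((hasDerivAt_id' s).const_mul (q * a))).congr_deriv (by ring)
  refine monotoneOn_of_hasDerivWithinAt_nonneg (convex_Icc t₀ t)
    (fun s hs ↦ (hderiv s hs).continuousAt.continuousWithinAt)
    (fun s hs ↦ (hderiv s (interior_subset hs)).hasDerivWithinAt) fun s hs ↦ ?_
  replace hs := interior_subset hs
  have hinv : g s ^ (q + 1) * g s ^ (-q - 1) = 1 := by
    rw [← Real.rpow_add (hpos s hs), show q + 1 + (-q - 1) = 0 by ring, Real.rpow_zero]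
  have hrate : g' s * g s ^ (-q - 1) ≤ -a :=
    calc g' s * g s ^ (-q - 1) ≤ -a * g s ^ (q + 1) * g s ^ (-q - 1) :=
          mul_le_mul_of_nonneg_right (hg' s hs) (Real.rpow_nonneg (hpos s hs).le _)
      _ = -a := by rw [mul_assoc, hinv, mul_one]
  nlinarith

lemma le_rpow_of_deriv_le_neg_mul_rpow (hq : 0 < q) (ha : 0 < a) (ht : t₀ < t)
    (hg : ∀ s ∈ Icc t₀ t, HasDerivAt g (g' s) s) (hpos : ∀ s ∈ Icc t₀ t, 0 < g s)
    (hg' : ∀ s ∈ Icc t₀ t, g' s ≤ -a * g s ^ (q + 1)) :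
    g t ≤ (q * a * (t - t₀)) ^ (-(1 / q)) := by
  have hmono := monotoneOn_rpow_neg_sub_mul hq.le hg hpos hg'
    (left_mem_Icc.2 ht.le) (right_mem_Icc.2 ht.le) ht.le
  have hstart := Real.rpow_pos_of_pos (hpos t₀ (left_mem_Icc.2 ht.le)) (-q)
  rw [one_div, neg_inv, Real.le_rpow_inv_iff_of_neg (hpos t (right_mem_Icc.2 ht.le))
    (by have := sub_pos.2 ht; positivity) (neg_neg_iff_pos.2 hq)]
  simp only at hmono
  nlinarith

end Bernoulli

theorem flow_ode_decay_bound_general (c₀ c₁ c₂ c₃ p : ℝ)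
    (h₀ : 0 ≤ c₀) (h₁ : 0 ≤ c₁) (h₃ : 0 < c₃) (hp : 0 < p) :
    ∃ c c' : ℝ, 0 < c ∧ 0 < c' ∧
      ∀ t₁ : ℝ, 0 < t₁ → ∀ f f' : ℝ → ℝ,
        (∀ t ∈ Set.Icc (0 : ℝ) t₁, HasDerivAt f (f' t) t) →
        (∀ t ∈ Set.Icc (0 : ℝ) t₁, 0 < f t) →
        (∀ t ∈ Set.Icc (0 : ℝ) t₁,
          f' t ≤ c₀ + c₁ * f t + c₂ * (f t) ^ 2 - c₃ * (f t) ^ (2 + p)) →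
        ∀ t ∈ Set.Ioc (0 : ℝ) t₁, f t ≤ c + c' * t ^ (-(1 / (p + 1))) := by
  obtain ⟨M, hM⟩ := eventually_atTop.1
    (eventually_quadratic_sub_rpow_le_neg_half h₀ h₁ h₃ hp)
  have hK : 0 < (p + 1) * (c₃ / 2) := by positivity
  refine ⟨max M 1, ((p + 1) * (c₃ / 2)) ^ (-(1 / (p + 1))), by positivity, by positivity, ?_⟩
  intro t₁ _ f f' hf hpos hode t ⟨ht, ht₁⟩
  have hdecay : ∀ s ∈ Icc 0 t₁, max M 1 ≤ f s → f' s ≤ -(c₃ / 2) * f s ^ (p + 1 + 1) :=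
    fun s hs hMs ↦ by
      rw [show p + 1 + 1 = 2 + p by ring]
      exact (hode s hs).trans (hM _ (le_of_max_le_left hMs))
  by_cases hft : f t ≤ max M 1
  · have := mul_pos (Real.rpow_pos_of_pos hK (-(1 / (p + 1))))
      (Real.rpow_pos_of_pos ht (-(1 / (p + 1))))
    linarith
  have hsub : Icc 0 t ⊆ Icc 0 t₁ := Icc_subset_Icc_right ht₁
  have hneg : ∀ s ∈ Icc 0 t, f s = max M 1 → f' s < 0 := fun s hs hs_eq ↦ by
    have := Real.rpow_pos_of_pos (hpos s (hsub hs)) (p + 1 + 1)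
    nlinarith [hdecay s (hsub hs) hs_eq.ge]
  have habove := const_lt_image_of_deriv_neg_of_eq (fun s hs ↦ hf s (hsub hs)) hneg
    (not_le.1 hft)
  have hbound := le_rpow_of_deriv_le_neg_mul_rpow (by positivity) (half_pos h₃) ht
    (fun s hs ↦ hf s (hsub hs)) (fun s hs ↦ hpos s (hsub hs))
    fun s hs ↦ hdecay s (hsub hs) (habove s hs).le
  rw [sub_zero, Real.mul_rpow hK.le ht.le] at hbound
  linarith [le_max_right M 1]

/-- Let `c₀, c₁, c₂ ≥ 0`, `c₃ > 0` and `p > 0`. Then there exist constants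
`c, c' > 0`, depending only on `c₀, c₁, c₂, c₃, p` (not on the solution or the time
interval), such that every positive differentiable `f` on `[0, t₁]` satisfying
`f' ≤ c₀ + c₁ f + c₂ f² − c₃ f^(2+p)` obeys `f t ≤ c + c' * t^(−1/(p+1))` on `(0, t₁]`. -/
theorem flow_ode_decay_bound (c₀ c₁ c₂ c₃ p : ℝ)
    (h₀ : 0 ≤ c₀) (h₁ : 0 ≤ c₁) (h₂ : 0 ≤ c₂) (h₃ : 0 < c₃) (hp : 0 < p) :
    ∃ c c' : ℝ, 0 < c ∧ 0 < c' ∧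
      ∀ t₁ : ℝ, 0 < t₁ → ∀ f f' : ℝ → ℝ,
        (∀ t ∈ Set.Icc (0 : ℝ) t₁, HasDerivAt f (f' t) t) →
        (∀ t ∈ Set.Icc (0 : ℝ) t₁, 0 < f t) →
        (∀ t ∈ Set.Icc (0 : ℝ) t₁,
          f' t ≤ c₀ + c₁ * f t + c₂ * (f t) ^ 2 - c₃ * (f t) ^ (2 + p)) →
        ∀ t ∈ Set.Ioc (0 : ℝ) t₁, f t ≤ c + c' * t ^ (-(1 / (p + 1))) :=
  flow_ode_decay_bound_general c₀ c₁ c₂ c₃ p h₀ h₁ h₃ hp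
end

section
/- Let n ≥ 2, let κ = (κ_1, …, κ_n) ∈ ℝ^n have all entries positive, let 1 ≤ l < n be an integer and let δ > 0. Then for every vector v = (v_1, …, v_n) ∈ ℝ^n one has: −Σ_{p≠q} σ_{n-2}(κ|pq) v_p v_q + (1 − 1/(n−l) + 1/((n−l)δ)) · (Σ_p σ_{n-1}(κ|p) v_p)² / σ_n(κ) ≥ (1 + (1−δ)/(n−l)) · σ_n(κ) · (Σ_p σ_{l-1}(κ|p) v_p)² / σ_l(κ)² − (σ_n(κ)/σ_l(κ)) · Σ_{p≠q} σ_{l-2}(κ|pq) v_p v_q. -/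
open Finset

/-- The `k`-th elementary symmetric polynomial of the values of `κ` on the index set `s`,
with the convention that it vanishes for negative `k` (and `σ₀ = 1`). -/
noncomputable def esymmSet {n : ℕ} (s : Finset (Fin n)) (k : ℤ) (κ : Fin n → ℝ) : ℝ :=
  if k < 0 then 0 else ∑ t ∈ s.powersetCard k.toNat, ∏ j ∈ t, κ j

/-!
Write `v p = κ p * x p`. Double counting turns the sums of `σ_{l-1}(κ|p)` and `σ_{l-2}(κ|pq)`
into sums over `l`-subsets `I` with weights `κ_I = ∏_{i ∈ I} κ i` of `a_I = ∑_{i ∈ I} x i` and of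
`a_I ^ 2 - ∑_{i ∈ I} x i ^ 2`; for `l = n` the only subset is `univ`. With `A = ∑ x i`,
`m = n - l` and `E` the `κ_I`-weighted mean, Cauchy–Schwarz gives `E[a] ^ 2 ≤ E[a ^ 2]` and
`(A - E[a]) ^ 2 ≤ E[(A - a) ^ 2] ≤ m * E[∑_{i ∉ I} x i ^ 2]`, and what remains of the inequality
is the square `(A - δ E[a]) ^ 2 ≥ 0`.
-/

namespace Finset

variable {ι : Type*} [DecidableEq ι]

theorem sum_sum_powersetCard_erase {M : Type*} [AddCommMonoid M] (s : Finset ι) (k : ℕ)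
    (f : Finset ι → ι → M) :
    ∑ p ∈ s, ∑ J ∈ (s.erase p).powersetCard k, f J p
      = ∑ I ∈ s.powersetCard (k + 1), ∑ p ∈ I, f (I.erase p) p := by
  rw [sum_sigma', sum_sigma']
  refine sum_nbij' (fun a ↦ ⟨insert a.1 a.2, a.1⟩) (fun a ↦ ⟨a.2, a.1.erase a.2⟩) ?_ ?_ ?_ ?_ ?_
  all_goals
    rintro ⟨a, b⟩ h
    simp only [mem_sigma, mem_powersetCard] at h
  · have hb : a ∉ b := fun ha ↦ (mem_erase.1 (h.2.1 ha)).1 rfl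
    simp only [mem_sigma, mem_powersetCard, mem_insert_self, and_true,
      card_insert_of_notMem hb, h.2.2]
    exact insert_subset h.1 (h.2.1.trans (erase_subset _ _))
  · simp only [mem_sigma, mem_powersetCard, card_erase_of_mem h.2, h.1.2]
    exact ⟨h.1.1 h.2, erase_subset_erase _ h.1.1, rfl⟩
  · have hb : a ∉ b := fun ha ↦ (mem_erase.1 (h.2.1 ha)).1 rfl
    simp [erase_insert hb]
  · simp [insert_erase h.2]
  · have hb : a ∉ b := fun ha ↦ (mem_erase.1 (h.2.1 ha)).1 rfl
    simp [erase_insert hb]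

theorem sum_sum_erase_mul {R : Type*} [CommRing R] (s : Finset ι) (f : ι → R) :
    ∑ p ∈ s, ∑ q ∈ s.erase p, f p * f q = (∑ p ∈ s, f p) ^ 2 - ∑ p ∈ s, f p ^ 2 := by
  have hrow (p) (hp : p ∈ s) : ∑ q ∈ s.erase p, f p * f q = f p * ∑ q ∈ s, f q - f p ^ 2 := by
    rw [← mul_sum, sum_erase_eq_sub hp, mul_sub, sq]
  rw [sum_congr rfl hrow, sum_sub_distrib, ← sum_mul, sq]

theorem sq_sum_sub_sum_le_card_sdiff_mul {s t : Finset ι} (h : s ⊆ t) (f : ι → ℝ) :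
    (∑ i ∈ t, f i - ∑ i ∈ s, f i) ^ 2 ≤ #(t \ s) * (∑ i ∈ t, f i ^ 2 - ∑ i ∈ s, f i ^ 2) := by
  rw [← sum_sdiff_eq_sub h, ← sum_sdiff_eq_sub h]
  exact sq_sum_le_card_mul_sum_sq

end Finset

section esymmSet

variable {n : ℕ}

theorem esymmSet_of_neg (s : Finset (Fin n)) {k : ℤ} (hk : k < 0) (κ : Fin n → ℝ) :
    esymmSet s k κ = 0 :=
  if_pos hk

theorem esymmSet_natCast (s : Finset (Fin n)) (k : ℕ) (κ : Fin n → ℝ) :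
    esymmSet s k κ = ∑ I ∈ s.powersetCard k, ∏ i ∈ I, κ i := by
  simp [esymmSet]

theorem sum_esymmSet_erase_mul (s : Finset (Fin n)) (l : ℕ) (κ x : Fin n → ℝ) :
    ∑ p ∈ s, esymmSet (s.erase p) ((l : ℤ) - 1) κ * (κ p * x p)
      = ∑ I ∈ s.powersetCard l, (∏ i ∈ I, κ i) * ∑ i ∈ I, x i := by
  cases l with
  | zero => simp [esymmSet_of_neg]
  | succ k =>
    simp only [Nat.cast_add, Nat.cast_one, add_sub_cancel_right, esymmSet_natCast, sum_mul]
    rw [sum_sum_powersetCard_erase s k fun J p ↦ (∏ j ∈ J, κ j) * (κ p * x p)]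
    refine sum_congr rfl fun I _ ↦ ?_
    rw [mul_sum]
    refine sum_congr rfl fun p hp ↦ ?_
    rw [← mul_prod_erase I κ hp]
    ring

theorem sum_sum_esymmSet_erase_erase_mul (s : Finset (Fin n)) (l : ℕ) (κ x : Fin n → ℝ) :
    ∑ p ∈ s, ∑ q ∈ s.erase p,
        esymmSet ((s.erase p).erase q) ((l : ℤ) - 2) κ * (κ p * x p) * (κ q * x q)
      = ∑ I ∈ s.powersetCard l,
          (∏ i ∈ I, κ i) * ((∑ i ∈ I, x i) ^ 2 - ∑ i ∈ I, x i ^ 2) := by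
  match l with
  | 0 => simp [esymmSet_of_neg]
  | 1 =>
    rw [sum_eq_zero fun p _ ↦ sum_eq_zero fun q _ ↦ by simp [esymmSet_of_neg]]
    refine (sum_eq_zero fun I hI ↦ ?_).symm
    obtain ⟨i, rfl⟩ := card_eq_one.1 (mem_powersetCard.1 hI).2
    simp
  | k + 2 =>
    simp only [Nat.cast_add, Nat.cast_ofNat, add_sub_cancel_right, esymmSet_natCast, sum_mul]
    rw [sum_congr rfl fun p _ ↦ sum_sum_powersetCard_erase (s.erase p) k
        fun J q ↦ (∏ j ∈ J, κ j) * (κ p * x p) * (κ q * x q),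
      sum_sum_powersetCard_erase s (k + 1)
        fun I p ↦ ∑ q ∈ I, (∏ j ∈ I.erase q, κ j) * (κ p * x p) * (κ q * x q)]
    refine sum_congr rfl fun I _ ↦ ?_
    rw [← sum_sum_erase_mul, mul_sum]
    refine sum_congr rfl fun p hp ↦ ?_
    rw [mul_sum]
    refine sum_congr rfl fun q hq ↦ ?_
    rw [← mul_prod_erase I κ hp, ← mul_prod_erase _ κ hq]
    ring

end esymmSet

theorem weighted_quotient_concavity {ι : Type*} (𝒮 : Finset ι) {w a b : ι → ℝ}
    (hw : ∀ I ∈ 𝒮, 0 ≤ w I) (hσ : 0 < ∑ I ∈ 𝒮, w I) {A B m δ : ℝ} (hm : 0 < m) (hδ : 0 < δ)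
    (hab : ∀ I ∈ 𝒮, (A - a I) ^ 2 ≤ m * (B - b I)) :
    (1 + (1 - δ) / m) * (∑ I ∈ 𝒮, w I * a I) ^ 2 / (∑ I ∈ 𝒮, w I) ^ 2
        - (∑ I ∈ 𝒮, w I * (a I ^ 2 - b I)) / ∑ I ∈ 𝒮, w I
      ≤ B - A ^ 2 + (1 - 1 / m + 1 / (m * δ)) * A ^ 2 := by
  set σ := ∑ I ∈ 𝒮, w I
  set S := ∑ I ∈ 𝒮, w I * a I
  set W := ∑ I ∈ 𝒮, w I * a I ^ 2
  set Z := ∑ I ∈ 𝒮, w I * b I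
  have cauchy_schwarz (f : ι → ℝ) : (∑ I ∈ 𝒮, w I * f I) ^ 2 ≤ σ * ∑ I ∈ 𝒮, w I * f I ^ 2 :=
    sum_sq_le_sum_mul_sum_of_sq_le_mul 𝒮 hw (fun I hI ↦ mul_nonneg (hw I hI) (sq_nonneg _))
      fun I _ ↦ (by ring : _ = _).le
  have hS : S ^ 2 ≤ σ * W := cauchy_schwarz a
  have hR : (σ * A - S) ^ 2 ≤ m * σ * (σ * B - Z) :=
    calc (σ * A - S) ^ 2 = (∑ I ∈ 𝒮, w I * (A - a I)) ^ 2 := by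
          simp only [mul_sub, sum_sub_distrib, ← sum_mul, σ, S]
      _ ≤ σ * ∑ I ∈ 𝒮, w I * (A - a I) ^ 2 := cauchy_schwarz _
      _ ≤ σ * ∑ I ∈ 𝒮, w I * (m * (B - b I)) := by
          gcongr with I hI
          exacts [hw I hI, hab I hI]
      _ = m * σ * (σ * B - Z) := by
          rw [sum_congr rfl fun I _ ↦ (by ring : w I * (m * (B - b I)) = m * (w I * B - w I * b I)),
            ← mul_sum, sum_sub_distrib, ← sum_mul]
          ring
  have hgap : B - A ^ 2 + (1 - 1 / m + 1 / (m * δ)) * A ^ 2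
      - ((1 + (1 - δ) / m) * S ^ 2 / σ ^ 2 - (∑ I ∈ 𝒮, w I * (a I ^ 2 - b I)) / σ)
      = (m * δ * (σ * W - S ^ 2) + δ * (m * σ * (σ * B - Z) - (σ * A - S) ^ 2)
          + (σ * A - δ * S) ^ 2) / (m * δ * σ ^ 2) := by
    simp only [mul_sub, sum_sub_distrib]
    field_simp
    ring
  have hnum : 0 ≤ m * δ * (σ * W - S ^ 2) + δ * (m * σ * (σ * B - Z) - (σ * A - S) ^ 2)
      + (σ * A - δ * S) ^ 2 := by
    have := sub_nonneg.2 hS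
    have := sub_nonneg.2 hR
    positivity
  rw [← sub_nonneg, hgap]
  positivity

theorem esymm_quotient_concavity_ineq_general (n : ℕ)
    (κ : Fin n → ℝ) (hκ : ∀ i, 0 < κ i)
    (l : ℕ) (hl2 : l < n) (δ : ℝ) (hδ : 0 < δ) (v : Fin n → ℝ) :
    -(∑ p : Fin n, ∑ q ∈ univ.erase p,
        esymmSet ((univ.erase p).erase q) ((n : ℤ) - 2) κ * v p * v q)
      + (1 - 1 / ((n : ℝ) - l) + 1 / (((n : ℝ) - l) * δ)) *
          (∑ p : Fin n, esymmSet (univ.erase p) ((n : ℤ) - 1) κ * v p) ^ 2 /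
            esymmSet univ (n : ℤ) κ
    ≥ (1 + (1 - δ) / ((n : ℝ) - l)) * esymmSet univ (n : ℤ) κ *
          (∑ p : Fin n, esymmSet (univ.erase p) ((l : ℤ) - 1) κ * v p) ^ 2 /
            (esymmSet univ (l : ℤ) κ) ^ 2
      - esymmSet univ (n : ℤ) κ / esymmSet univ (l : ℤ) κ *
          ∑ p : Fin n, ∑ q ∈ univ.erase p,
            esymmSet ((univ.erase p).erase q) ((l : ℤ) - 2) κ * v p * v q := by
  obtain ⟨x, rfl⟩ : ∃ x, v = fun p ↦ κ p * x p :=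
    ⟨fun p ↦ v p / κ p, funext fun p ↦ (mul_div_cancel₀ _ (hκ p).ne').symm⟩
  have huniv : (univ : Finset (Fin n)).powersetCard n = {univ} := by
    simpa using powersetCard_self (univ : Finset (Fin n))
  simp only [sum_esymmSet_erase_mul, sum_sum_esymmSet_erase_erase_mul, esymmSet_natCast, huniv,
    sum_singleton]
  set P := ∏ i, κ i
  set 𝒮 := (univ : Finset (Fin n)).powersetCard l
  have hP : 0 < P := prod_pos fun i _ ↦ hκ i
  have hσ : 0 < ∑ I ∈ 𝒮, ∏ i ∈ I, κ i :=
    sum_pos (fun I _ ↦ prod_pos fun i _ ↦ hκ i) (powersetCard_nonempty.2 (by simpa using hl2.le))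
  have key := weighted_quotient_concavity 𝒮 (fun I _ ↦ (prod_pos fun i _ ↦ hκ i).le) hσ
    (A := ∑ i, x i) (B := ∑ i, x i ^ 2) (m := (n : ℝ) - l) (sub_pos.2 (by exact_mod_cast hl2)) hδ
    fun I hI ↦ by
      have hcard : (#(univ \ I) : ℝ) = n - l := by
        rw [← compl_eq_univ_sdiff, card_compl, Fintype.card_fin, (mem_powersetCard.1 hI).2,
          Nat.cast_sub hl2.le]
      simpa [hcard] using sq_sum_sub_sum_le_card_sdiff_mul (subset_univ I) x
  refine Eq.trans_le ?_ ((mul_le_mul_of_nonneg_left key hP.le).trans_eq ?_)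
  · ring
  · field_simp
    ring

/-- Guan–Ren–Wang type concavity inequality for quotients `σ_n/σ_l`. -/
theorem esymm_quotient_concavity_ineq (n : ℕ) (hn : 2 ≤ n)
    (κ : Fin n → ℝ) (hκ : ∀ i, 0 < κ i)
    (l : ℕ) (hl1 : 1 ≤ l) (hl2 : l < n) (δ : ℝ) (hδ : 0 < δ) (v : Fin n → ℝ) :
    -(∑ p : Fin n, ∑ q ∈ univ.erase p,
        esymmSet ((univ.erase p).erase q) ((n : ℤ) - 2) κ * v p * v q)
      + (1 - 1 / ((n : ℝ) - l) + 1 / (((n : ℝ) - l) * δ)) *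
          (∑ p : Fin n, esymmSet (univ.erase p) ((n : ℤ) - 1) κ * v p) ^ 2 /
            esymmSet univ (n : ℤ) κ
    ≥ (1 + (1 - δ) / ((n : ℝ) - l)) * esymmSet univ (n : ℤ) κ *
          (∑ p : Fin n, esymmSet (univ.erase p) ((l : ℤ) - 1) κ * v p) ^ 2 /
            (esymmSet univ (l : ℤ) κ) ^ 2
      - esymmSet univ (n : ℤ) κ / esymmSet univ (l : ℤ) κ *
          ∑ p : Fin n, ∑ q ∈ univ.erase p,
            esymmSet ((univ.erase p).erase q) ((l : ℤ) - 2) κ * v p * v q :=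
  esymm_quotient_concavity_ineq_general n κ hκ l hl2 δ hδ v
end

section
/- Let n ≥ 2, let κ = (κ_1, …, κ_n) ∈ ℝ^n have all entries positive with κ_1 = max_{1≤j≤n} κ_j, and let u = (u_{j,i}) be an arbitrary real n×n array. If i ≠ 1 is an index with √3 · κ_i ≤ κ_1, then B_i + C_i + D_i − E_i ≥ 0. -/
/-!
For `j ≠ i` one has `κ_j K^{jj,ii} = K^{ii}`, so `B_i + D_i = (K^{ii}/‖W‖²) Σ_j w_j u_{j,i}²`
with weights `w_i = 1` and `w_j = 3` otherwise, while `C_i ≥ 0`. Weighted Cauchy–Schwarz gives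
`(Σ_j κ_j u_{j,i})² ≤ (Σ_j κ_j²/w_j) (Σ_j w_j u_{j,i}²)`, and
`Σ_j κ_j²/w_j = κ_i² + (‖W‖² − κ_i²)/3 ≤ ‖W‖²/2` because `‖W‖² ≥ κ_1² + κ_i² ≥ 4κ_i²`.
Hence `E_i ≤ B_i + D_i`.
-/

open Finset

/-- `‖W‖² = Σ_j κ_j²`. -/
noncomputable def Wsq {n : ℕ} (κ : Fin n → ℝ) : ℝ := ∑ j, (κ j) ^ 2

/-- The Gauss curvature `K = σ_n(κ) = κ_1 ⋯ κ_n`. -/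
noncomputable def Kcurv {n : ℕ} (κ : Fin n → ℝ) : ℝ := ∏ j, κ j

/-- `K^{pp} = σ_{n-1}(κ|p) = ∏_{j≠p} κ_j`. -/
noncomputable def Kp {n : ℕ} (κ : Fin n → ℝ) (p : Fin n) : ℝ :=
  ∏ j ∈ univ.erase p, κ j

/-- `K^{pp,qq} = σ_{n-2}(κ|pq) = ∏_{j≠p,q} κ_j` for `p ≠ q`, and `K^{pp,pp} = 0`. -/
noncomputable def Kpq {n : ℕ} (κ : Fin n → ℝ) (p q : Fin n) : ℝ :=
  if p = q then 0 else ∏ j ∈ (univ.erase p).erase q, κ j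

/-- `K_{;i} = Σ_p K^{pp} u_{p,i}`. -/
noncomputable def Kder {n : ℕ} (κ : Fin n → ℝ) (u : Fin n → Fin n → ℝ) (i : Fin n) : ℝ :=
  ∑ p, Kp κ p * u p i

/-- `A_i = ((2−ε)κ_i/(‖W‖² K)) K_{;i}² − (κ_i/‖W‖²) Σ_{p,q} K^{pp,qq} u_{p,i} u_{q,i}`. -/
noncomputable def termA {n : ℕ} (ε : ℝ) (κ : Fin n → ℝ) (u : Fin n → Fin n → ℝ)
    (i : Fin n) : ℝ :=
  (2 - ε) * κ i / (Wsq κ * Kcurv κ) * (Kder κ u i) ^ 2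
    - κ i / Wsq κ * ∑ p, ∑ q, Kpq κ p q * u p i * u q i

/-- `B_i = (2/‖W‖²) Σ_j κ_j K^{jj,ii} u_{j,i}²`. -/
noncomputable def termB {n : ℕ} (κ : Fin n → ℝ) (u : Fin n → Fin n → ℝ) (i : Fin n) : ℝ :=
  2 / Wsq κ * ∑ j, κ j * Kpq κ j i * (u j i) ^ 2

/-- `C_i = (2/‖W‖²) Σ_{j≠i} K^{jj} u_{j,i}²`. -/
noncomputable def termC {n : ℕ} (κ : Fin n → ℝ) (u : Fin n → Fin n → ℝ) (i : Fin n) : ℝ :=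
  2 / Wsq κ * ∑ j ∈ univ.erase i, Kp κ j * (u j i) ^ 2

/-- `D_i = (K^{ii}/‖W‖²) Σ_j u_{j,i}²`. -/
noncomputable def termD {n : ℕ} (κ : Fin n → ℝ) (u : Fin n → Fin n → ℝ) (i : Fin n) : ℝ :=
  Kp κ i / Wsq κ * ∑ j, (u j i) ^ 2

/-- `E_i = (2K^{ii}/‖W‖⁴) (Σ_j κ_j u_{j,i})²`. -/
noncomputable def termE {n : ℕ} (κ : Fin n → ℝ) (u : Fin n → Fin n → ℝ) (i : Fin n) : ℝ :=
  2 * Kp κ i / (Wsq κ) ^ 2 * (∑ j, κ j * u j i) ^ 2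

namespace PrincipalCurvatures

variable {n : ℕ} (κ : Fin n → ℝ)

theorem mul_Kpq_of_ne {i j : Fin n} (hji : j ≠ i) : κ j * Kpq κ j i = Kp κ i := by
  rw [Kpq, if_neg hji, erase_right_comm, Kp]
  exact mul_prod_erase _ _ (mem_erase.mpr ⟨hji, mem_univ j⟩)

theorem sum_mul_Kpq_mul (i : Fin n) (x : Fin n → ℝ) :
    ∑ j, κ j * Kpq κ j i * x j = Kp κ i * ∑ j ∈ univ.erase i, x j := by
  rw [← add_sum_erase _ _ (mem_univ i), Kpq, if_pos rfl, mul_zero, zero_mul, zero_add, mul_sum]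
  exact sum_congr rfl fun j hj => by rw [mul_Kpq_of_ne κ (ne_of_mem_erase hj)]

theorem Wsq_nonneg : 0 ≤ Wsq κ :=
  sum_nonneg fun j _ => sq_nonneg (κ j)

variable {κ}

theorem Kp_nonneg (hκ : ∀ j, 0 ≤ κ j) (p : Fin n) : 0 ≤ Kp κ p :=
  prod_nonneg fun j _ => hκ j

theorem termC_nonneg (hκ : ∀ j, 0 ≤ κ j) (u : Fin n → Fin n → ℝ) (i : Fin n) :
    0 ≤ termC κ u i :=
  mul_nonneg (div_nonneg zero_le_two (Wsq_nonneg κ))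
    (sum_nonneg fun j _ => mul_nonneg (Kp_nonneg hκ j) (sq_nonneg _))

variable (κ)

def weight (i j : Fin n) : ℝ := if j = i then 1 else 3

theorem weight_pos (i j : Fin n) : 0 < weight i j := by
  unfold weight; split_ifs <;> norm_num

theorem termB_add_termD (u : Fin n → Fin n → ℝ) (i : Fin n) :
    termB κ u i + termD κ u i = Kp κ i / Wsq κ * ∑ j, weight i j * u j i ^ 2 := by
  have hw : ∑ j ∈ univ.erase i, weight i j * u j i ^ 2 = 3 * ∑ j ∈ univ.erase i, u j i ^ 2 := by
    rw [mul_sum]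
    exact sum_congr rfl fun j hj => by rw [weight, if_neg (ne_of_mem_erase hj)]
  rw [termB, termD, sum_mul_Kpq_mul, ← add_sum_erase _ _ (mem_univ i),
    ← add_sum_erase _ (fun j => weight i j * u j i ^ 2) (mem_univ i), hw, weight, if_pos rfl]
  ring

theorem sq_sum_mul_le (u : Fin n → Fin n → ℝ) (i : Fin n) :
    (∑ j, κ j * u j i) ^ 2 ≤ (∑ j, κ j ^ 2 / weight i j) * ∑ j, weight i j * u j i ^ 2 :=
  sum_sq_le_sum_mul_sum_of_sq_le_mul _
    (fun j _ => div_nonneg (sq_nonneg _) (weight_pos i j).le)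
    (fun j _ => mul_nonneg (weight_pos i j).le (sq_nonneg _))
    fun j _ => le_of_eq (by field_simp [(weight_pos i j).ne'])

theorem sum_sq_div_weight (i : Fin n) :
    ∑ j, κ j ^ 2 / weight i j = κ i ^ 2 + (Wsq κ - κ i ^ 2) / 3 := by
  rw [Wsq, ← add_sum_erase _ _ (mem_univ i), ← add_sum_erase _ _ (mem_univ i), weight,
    if_pos rfl, div_one, add_sub_cancel_left, sum_div]
  exact congrArg _ (sum_congr rfl fun j hj => by rw [weight, if_neg (ne_of_mem_erase hj)])

theorem four_mul_sq_le_Wsq {i j : Fin n} (hij : i ≠ j) (h : 3 * κ i ^ 2 ≤ κ j ^ 2) :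
    4 * κ i ^ 2 ≤ Wsq κ := by
  have hpair : κ i ^ 2 + κ j ^ 2 ≤ Wsq κ := by
    rw [← sum_pair (f := fun k => κ k ^ 2) hij, Wsq]
    exact sum_le_sum_of_subset_of_nonneg (subset_univ _) fun k _ _ => sq_nonneg (κ k)
  linarith

variable {κ}

theorem termE_le_termB_add_termD (hκ : ∀ j, 0 ≤ κ j) (u : Fin n → Fin n → ℝ) {i : Fin n}
    (h : 4 * κ i ^ 2 ≤ Wsq κ) : termE κ u i ≤ termB κ u i + termD κ u i := by
  set T := ∑ j, weight i j * u j i ^ 2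
  have hT : 0 ≤ T := sum_nonneg fun j _ => mul_nonneg (weight_pos i j).le (sq_nonneg _)
  have hS : (∑ j, κ j * u j i) ^ 2 ≤ Wsq κ / 2 * T := by
    refine (sq_sum_mul_le κ u i).trans (mul_le_mul_of_nonneg_right ?_ hT)
    rw [sum_sq_div_weight]
    linarith
  rw [termE, termB_add_termD]
  rcases (Wsq_nonneg κ).eq_or_lt with hW | hW
  · simp [← hW]
  have hK := Kp_nonneg hκ i
  calc 2 * Kp κ i / Wsq κ ^ 2 * (∑ j, κ j * u j i) ^ 2
      ≤ 2 * Kp κ i / Wsq κ ^ 2 * (Wsq κ / 2 * T) := by gcongr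
    _ = Kp κ i / Wsq κ * T := by field_simp

end PrincipalCurvatures

/-- Lemma about balancing curvature derivative terms: if `κ_1` is the largest
principal curvature and `√3 κ_i ≤ κ_1` for some index `i ≠ 1`, then
`B_i + C_i + D_i − E_i ≥ 0`. -/
theorem termBCDE_nonneg_of_small (n : ℕ) (hn : 2 ≤ n)
    (κ : Fin n → ℝ) (hκ : ∀ i, 0 < κ i)
    (u : Fin n → Fin n → ℝ) (i : Fin n) (hi : i ≠ ⟨0, by omega⟩)
    (h3 : Real.sqrt 3 * κ i ≤ κ ⟨0, by omega⟩) :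
    0 ≤ termB κ u i + termC κ u i + termD κ u i - termE κ u i := by
  have hκ' : ∀ j, 0 ≤ κ j := fun j => (hκ j).le
  have h3' : 3 * κ i ^ 2 ≤ κ ⟨0, by omega⟩ ^ 2 := by
    have := pow_le_pow_left₀ (mul_nonneg (Real.sqrt_nonneg 3) (hκ' i)) h3 2
    rwa [mul_pow, Real.sq_sqrt zero_le_three] at this
  linarith [PrincipalCurvatures.termE_le_termB_add_termD hκ' u
    (PrincipalCurvatures.four_mul_sq_le_Wsq κ hi h3'), PrincipalCurvatures.termC_nonneg hκ' u i]
end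

section
/- Let n ≥ 2, let κ = (κ_1, …, κ_n) ∈ ℝ^n have all entries positive, and let u = (u_{j,i}) be an arbitrary real n×n array. Then for every index i one has ‖W‖⁴ · (B_i + C_i + D_i − E_i) ≥ ‖W‖² · Σ_{j≠i} σ_{n-1}(κ|j) u_{j,i}² − κ_i² · σ_{n-1}(κ|i) · u_{i,i}². -/
/-!
Put `W = ‖W‖²`, `K = K^{ii}`, `M = Σ_{j≠i} κ_j²` (so `W = M + κ_i²`), and use the
product identities `κ_j K^{jj,ii} = K^{ii}` and `κ_j K^{jj} = κ_i K^{ii}`. After clearing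
denominators, the difference of the two sides is
`Σ_{j≠i} ((W - 2κ_i²) K + W K^{jj}) u_{j,i}² + K Σ_{j≠i} (2κ_i u_{j,i} - κ_j u_{i,i})²
  + 2K (M Σ_{j≠i} u_{j,i}² - (Σ_{j≠i} κ_j u_{j,i})²)`.
The last term is nonnegative by Cauchy–Schwarz, and each coefficient of the first sum is
nonnegative because, multiplied by `κ_j`, it becomes `K ((W - 2κ_i²) κ_j + W κ_i)` with
`W ≥ κ_i² + κ_j²`.
-/

open Finset

section
variable {n : ℕ} (κ : Fin n → ℝ)

theorem Kp_mul_self (p : Fin n) : Kp κ p * κ p = Kcurv κ :=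
  prod_erase_mul _ _ (mem_univ p)

theorem mul_Kpq_of_ne {p q : Fin n} (h : p ≠ q) : κ p * Kpq κ p q = Kp κ q := by
  rw [Kpq, if_neg h, Kp, erase_right_comm]
  exact mul_prod_erase _ _ (mem_erase.2 ⟨h, mem_univ p⟩)

theorem Kp_pos (hκ : ∀ j, 0 < κ j) (p : Fin n) : 0 < Kp κ p :=
  prod_pos fun j _ => hκ j

theorem Wsq_eq_sum_erase_add (i : Fin n) : Wsq κ = ∑ j ∈ univ.erase i, κ j ^ 2 + κ i ^ 2 :=
  (sum_erase_add _ _ (mem_univ i)).symm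

theorem Wsq_pos_of_ne_zero {i : Fin n} (h : κ i ≠ 0) : 0 < Wsq κ :=
  sum_pos' (fun j _ => sq_nonneg (κ j)) ⟨i, mem_univ i, by positivity⟩

theorem sq_add_sq_le_Wsq {i j : Fin n} (h : j ≠ i) : κ i ^ 2 + κ j ^ 2 ≤ Wsq κ := by
  rw [Wsq_eq_sum_erase_add κ i, add_comm]
  gcongr
  exact single_le_sum (fun l _ => sq_nonneg (κ l)) (mem_erase.2 ⟨h, mem_univ j⟩)

theorem sum_mul_Kpq_mul_sq (u : Fin n → Fin n → ℝ) (i : Fin n) :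
    ∑ j, κ j * Kpq κ j i * u j i ^ 2 = Kp κ i * ∑ j ∈ univ.erase i, u j i ^ 2 := by
  rw [← sum_erase_add _ _ (mem_univ i), Kpq, if_pos rfl, mul_zero, zero_mul, add_zero, mul_sum]
  exact sum_congr rfl fun j hj => by rw [mul_Kpq_of_ne κ (ne_of_mem_erase hj)]

theorem mul_add_mul_nonneg_of_sq_add_sq_le {a b w : ℝ} (ha : 0 < a) (hb : 0 < b)
    (hw : a ^ 2 + b ^ 2 ≤ w) : 0 ≤ (w - 2 * a ^ 2) * b + w * a := by
  nlinarith [mul_nonneg (sub_nonneg.2 hw) (add_pos ha hb).le,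
    mul_nonneg ha.le (sq_nonneg (a - b)), pow_pos hb 3, mul_pos (mul_pos ha ha) hb]

theorem Wsq_sub_mul_Kp_add_nonneg (hκ : ∀ j, 0 < κ j) {i j : Fin n} (h : j ≠ i) :
    0 ≤ (Wsq κ - 2 * κ i ^ 2) * Kp κ i + Wsq κ * Kp κ j := by
  have hscaled : ((Wsq κ - 2 * κ i ^ 2) * Kp κ i + Wsq κ * Kp κ j) * κ j
      = Kp κ i * ((Wsq κ - 2 * κ i ^ 2) * κ j + Wsq κ * κ i) := by
    linear_combination Wsq κ * (Kp_mul_self κ j).trans (Kp_mul_self κ i).symm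
  refine nonneg_of_mul_nonneg_left ?_ (hκ j)
  rw [hscaled]
  exact mul_nonneg (Kp_pos κ hκ i).le
    (mul_add_mul_nonneg_of_sq_add_sq_le (hκ i) (hκ j) (sq_add_sq_le_Wsq κ h))

theorem Wsq_sq_mul_termBCDE_sub_eq (hW0 : Wsq κ ≠ 0) (u : Fin n → Fin n → ℝ) (i : Fin n) :
    Wsq κ ^ 2 * (termB κ u i + termC κ u i + termD κ u i - termE κ u i)
        - (Wsq κ * ∑ j ∈ univ.erase i, Kp κ j * u j i ^ 2 - κ i ^ 2 * Kp κ i * u i i ^ 2)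
      = ∑ j ∈ univ.erase i, ((Wsq κ - 2 * κ i ^ 2) * Kp κ i + Wsq κ * Kp κ j) * u j i ^ 2
        + Kp κ i * ∑ j ∈ univ.erase i, (2 * κ i * u j i - κ j * u i i) ^ 2
        + 2 * Kp κ i * ((∑ j ∈ univ.erase i, κ j ^ 2) * ∑ j ∈ univ.erase i, u j i ^ 2
          - (∑ j ∈ univ.erase i, κ j * u j i) ^ 2) := by
  set s := univ.erase i
  set W := Wsq κ
  set K := Kp κ i
  set T := ∑ j ∈ s, u j i ^ 2
  set S := ∑ j ∈ s, κ j * u j i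
  set M := ∑ j ∈ s, κ j ^ 2
  set P := ∑ j ∈ s, Kp κ j * u j i ^ 2
  have hW : W = M + κ i ^ 2 := Wsq_eq_sum_erase_add κ i
  have hB : termB κ u i = 2 / W * (K * T) := by rw [termB, sum_mul_Kpq_mul_sq]
  have hC : termC κ u i = 2 / W * P := rfl
  have hD : termD κ u i = K / W * (T + u i i ^ 2) := by
    rw [termD, ← sum_erase_add _ _ (mem_univ i)]
  have hE : termE κ u i = 2 * K / W ^ 2 * (S + κ i * u i i) ^ 2 := by
    rw [termE, ← sum_erase_add _ _ (mem_univ i)]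
  have hweighted : ∑ j ∈ s, ((W - 2 * κ i ^ 2) * K + W * Kp κ j) * u j i ^ 2
      = (W - 2 * κ i ^ 2) * K * T + W * P := by
    simp only [T, P, add_mul, sum_add_distrib, mul_sum, mul_assoc]
  have hsquares : ∑ j ∈ s, (2 * κ i * u j i - κ j * u i i) ^ 2
      = 4 * κ i ^ 2 * T - 4 * κ i * u i i * S + M * u i i ^ 2 := by
    simp only [T, S, M, mul_sum, sum_mul, ← sum_sub_distrib, ← sum_add_distrib]
    exact sum_congr rfl fun j _ => by ring
  rw [hB, hC, hD, hE, hweighted, hsquares]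
  field_simp
  rw [hW]
  ring

end

theorem Wsq_sq_mul_termBCDE_ge_general (n : ℕ)
    (κ : Fin n → ℝ) (hκ : ∀ i, 0 < κ i)
    (u : Fin n → Fin n → ℝ) (i : Fin n) :
    (Wsq κ) ^ 2 * (termB κ u i + termC κ u i + termD κ u i - termE κ u i)
      ≥ Wsq κ * (∑ j ∈ univ.erase i, Kp κ j * (u j i) ^ 2)
        - (κ i) ^ 2 * Kp κ i * (u i i) ^ 2 := by
  have hK : 0 < Kp κ i := Kp_pos κ hκ i
  have hweighted :
      0 ≤ ∑ j ∈ univ.erase i, ((Wsq κ - 2 * κ i ^ 2) * Kp κ i + Wsq κ * Kp κ j) * u j i ^ 2 :=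
    sum_nonneg fun j hj =>
      mul_nonneg (Wsq_sub_mul_Kp_add_nonneg κ hκ (ne_of_mem_erase hj)) (sq_nonneg _)
  have hsquares : 0 ≤ ∑ j ∈ univ.erase i, (2 * κ i * u j i - κ j * u i i) ^ 2 :=
    sum_nonneg fun j _ => sq_nonneg _
  have hcs := sum_mul_sq_le_sq_mul_sq (univ.erase i) κ (fun j => u j i)
  have hW0 : Wsq κ ≠ 0 := (Wsq_pos_of_ne_zero κ (hκ i).ne').ne'
  rw [ge_iff_le, ← sub_nonneg, Wsq_sq_mul_termBCDE_sub_eq κ hW0]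
  exact add_nonneg (add_nonneg hweighted (mul_nonneg hK.le hsquares))
    (mul_nonneg (by positivity) (sub_nonneg.2 hcs))

/-- for every index `i`,
`‖W‖⁴ (B_i + C_i + D_i − E_i) ≥ ‖W‖² Σ_{j≠i} σ_{n-1}(κ|j) u_{j,i}² − κ_i² σ_{n-1}(κ|i) u_{i,i}²`. -/
theorem Wsq_sq_mul_termBCDE_ge (n : ℕ) (hn : 2 ≤ n)
    (κ : Fin n → ℝ) (hκ : ∀ i, 0 < κ i)
    (u : Fin n → Fin n → ℝ) (i : Fin n) :
    (Wsq κ) ^ 2 * (termB κ u i + termC κ u i + termD κ u i - termE κ u i)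
      ≥ Wsq κ * (∑ j ∈ univ.erase i, Kp κ j * (u j i) ^ 2)
        - (κ i) ^ 2 * Kp κ i * (u i i) ^ 2 :=
  Wsq_sq_mul_termBCDE_ge_general n κ hκ u i
end
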